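/- arXiv:2012.02006 — 5 statements merged into one kernel-verified Lean document; each statement's English description precedes it below -/
import Mathlib

section
/- (Splicing Condition, Theorem 1.) Let B₁ and B₂ be blocks with S(B₁) > 0, all weights nonnegative, and g(B₁) ≥ g(B₂). Let E ⊆ B₂ be a subblock of B₂ that is disjoint from B₁ as a Finset of entries. Then g(B₁ ∪ E) > g(B₁) if and only if M(E) > Q(B₁, E) · g(B₁). -/
open Finset

variable {α ι : Type*} [DecidableEq α] [DecidableEq ι]

/-- Mass of a block: sum of entry weights. -/
noncomputable def blockMass (w : α → ℝ) (B : Finset α) : ℝ := ∑ e ∈ B, w e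

/-- Mode-`n` index set of a block. -/
def modeIdx {N : ℕ} (π : Fin N → α → ι) (n : Fin N) (B : Finset α) : Finset ι :=
  B.image (π n)

/-- Size of a block: total number of indices over all modes. -/
def blockSize {N : ℕ} (π : Fin N → α → ι) (B : Finset α) : ℕ :=
  ∑ n : Fin N, (modeIdx π n B).card

/-- Density of a block: mass divided by size. -/
noncomputable def density {N : ℕ} (w : α → ℝ) (π : Fin N → α → ι) (B : Finset α) : ℝ :=
  blockMass w B / (blockSize π B : ℝ)

/-- Total number of new indices that `E` brings into `B`. -/
def newIdxCount {N : ℕ} (π : Fin N → α → ι) (B E : Finset α) : ℕ :=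
  ∑ n : Fin N, ((modeIdx π n E) \ (modeIdx π n B)).card

/-- **Splicing Condition (Theorem 1).** For blocks `B₁`, `B₂` with `S(B₁) > 0`,
nonnegative weights and `g(B₁) ≥ g(B₂)`, and a subblock `E ⊆ B₂` disjoint from `B₁`,
`g(B₁ ∪ E) > g(B₁)` iff `M(E) > Q(B₁, E) · g(B₁)`. -/
theorem splicing_condition {N : ℕ} (w : α → ℝ) (π : Fin N → α → ι)
    (B₁ B₂ E : Finset α)
    (hw : ∀ a, 0 ≤ w a)
    (hS : 0 < blockSize π B₁)
    (hg : density w π B₁ ≥ density w π B₂)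
    (hE : E ⊆ B₂)
    (hdisj : Disjoint E B₁) :
    density w π (B₁ ∪ E) > density w π B₁ ↔
      blockMass w E > (newIdxCount π B₁ E : ℝ) * density w π B₁ := by
  have hsize : blockSize π (B₁ ∪ E) = blockSize π B₁ + newIdxCount π B₁ E := by
    unfold blockSize newIdxCount modeIdx
    rw [← Finset.sum_add_distrib]
    refine Finset.sum_congr rfl fun n _ => ?_
    rw [Finset.image_union, Finset.union_comm, ← Finset.card_sdiff_add_card]
    omega
  have hmass : blockMass w (B₁ ∪ E) = blockMass w B₁ + blockMass w E := by
    unfold blockMass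
    exact Finset.sum_union hdisj.symm
  have hS' : (0 : ℝ) < (blockSize π B₁ : ℝ) := by exact_mod_cast hS
  have hSQ : (0 : ℝ) < (blockSize π B₁ : ℝ) + (newIdxCount π B₁ E : ℝ) := by
    positivity
  unfold density
  rw [hmass, hsize]
  push_cast
  rw [gt_iff_lt, gt_iff_lt, div_lt_div_iff₀ hS' hSQ, mul_comm, ← div_lt_iff₀ hS',
    mul_div_assoc]
  have key : ((blockSize π B₁ : ℝ) + (newIdxCount π B₁ E : ℝ)) *
      (blockMass w B₁ / (blockSize π B₁ : ℝ)) =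
      (newIdxCount π B₁ E : ℝ) * (blockMass w B₁ / (blockSize π B₁ : ℝ)) +
        blockMass w B₁ := by
    field_simp
    ring
  rw [key]
  constructor <;> intro h <;> linarith
end

section
/- (Splicing Condition, sufficiency.) Let B₁ be a block with S(B₁) > 0 and nonnegative weights, and let E be a block with nonnegative weights disjoint from B₁ as a Finset of entries. If M(E) > Q(B₁, E) · g(B₁), then g(B₁ ∪ E) > g(B₁). -/
open Finset

variable {α ι : Type*} [DecidableEq α] [DecidableEq ι]

/-- **Splicing Condition, sufficiency.** If `M(E) > Q(B₁, E) · g(B₁)`,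
then `g(B₁ ∪ E) > g(B₁)`. -/
theorem splicing_condition_sufficiency {N : ℕ} (w : α → ℝ) (π : Fin N → α → ι)
    (B₁ E : Finset α)
    (hw : ∀ a, 0 ≤ w a)
    (hS : 0 < blockSize π B₁)
    (hdisj : Disjoint E B₁)
    (hmass : blockMass w E > (newIdxCount π B₁ E : ℝ) * density w π B₁) :
    density w π (B₁ ∪ E) > density w π B₁ := by
  have hsize : blockSize π (B₁ ∪ E) = blockSize π B₁ + newIdxCount π B₁ E := by
    unfold blockSize newIdxCount
    rw [← Finset.sum_add_distrib]
    refine Finset.sum_congr rfl fun n _ => ?_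
    have h1 : modeIdx π n (B₁ ∪ E) = modeIdx π n B₁ ∪ modeIdx π n E := by
      simp [modeIdx, Finset.image_union]
    rw [h1, Finset.union_comm, ← Finset.card_sdiff_add_card]
    ring
  have hmassU : blockMass w (B₁ ∪ E) = blockMass w B₁ + blockMass w E := by
    unfold blockMass
    rw [Finset.sum_union hdisj.symm]
  have hMB : (0:ℝ) ≤ blockMass w B₁ := Finset.sum_nonneg fun a _ => hw a
  have hSpos : (0:ℝ) < (blockSize π B₁ : ℝ) := by exact_mod_cast hS
  have hS'pos : (0:ℝ) < (blockSize π (B₁ ∪ E) : ℝ) := by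
    rw [hsize]; push_cast; linarith [(Nat.cast_nonneg (newIdxCount π B₁ E) : (0:ℝ) ≤ _)]
  unfold density at *
  rw [gt_iff_lt, div_lt_div_iff₀ hSpos hS'pos]
  rw [hsize, hmassU]
  push_cast
  have h2 : (newIdxCount π B₁ E : ℝ) * (blockMass w B₁ / (blockSize π B₁ : ℝ)) * (blockSize π B₁ : ℝ) < blockMass w E * (blockSize π B₁ : ℝ) :=
    mul_lt_mul_of_pos_right hmass hSpos
  rw [mul_assoc, div_mul_cancel₀ _ (ne_of_gt hSpos)] at h2
  nlinarith [h2]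
end

section
/- (Splicing Condition, necessity.) Let B₁ be a block with S(B₁) > 0 and nonnegative weights, and let E be a block with nonnegative weights disjoint from B₁ as a Finset of entries. If g(B₁ ∪ E) > g(B₁), then M(E) > Q(B₁, E) · g(B₁). -/
open Finset

variable {α ι : Type*} [DecidableEq α] [DecidableEq ι]

/-- **Splicing Condition, necessity.** If `g(B₁ ∪ E) > g(B₁)`,
then `M(E) > Q(B₁, E) · g(B₁)`. -/
theorem splicing_condition_necessity {N : ℕ} (w : α → ℝ) (π : Fin N → α → ι)
    (B₁ E : Finset α)
    (hw : ∀ a, 0 ≤ w a)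
    (hS : 0 < blockSize π B₁)
    (hdisj : Disjoint E B₁)
    (hdens : density w π (B₁ ∪ E) > density w π B₁) :
    blockMass w E > (newIdxCount π B₁ E : ℝ) * density w π B₁ := by
  have hSize : blockSize π (B₁ ∪ E) = blockSize π B₁ + newIdxCount π B₁ E := by
    unfold blockSize newIdxCount
    rw [← Finset.sum_add_distrib]
    refine Finset.sum_congr rfl fun n _ => ?_
    have : modeIdx π n (B₁ ∪ E) = modeIdx π n B₁ ∪ modeIdx π n E := by
      simp [modeIdx, Finset.image_union]
    rw [this, Finset.union_comm, ← Finset.card_sdiff_add_card]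
    ring
  have hMass : blockMass w (B₁ ∪ E) = blockMass w B₁ + blockMass w E := by
    unfold blockMass
    rw [Finset.union_comm, Finset.sum_union hdisj]
    ring
  set M₁ := blockMass w B₁
  set ME := blockMass w E
  set S₁ := (blockSize π B₁ : ℝ)
  set Q := (newIdxCount π B₁ E : ℝ)
  have hS₁ : (0:ℝ) < S₁ := by unfold S₁; exact_mod_cast hS
  have hQ : (0:ℝ) ≤ Q := by positivity
  have hSQ : (0:ℝ) < S₁ + Q := by linarith
  have hd : (M₁ + ME) / (S₁ + Q) > M₁ / S₁ := by
    have := hdens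
    unfold density at this
    rw [hSize, hMass] at this
    push_cast at this
    exact this
  rw [gt_iff_lt, div_lt_div_iff₀ hS₁ hSQ] at hd
  have key : M₁ * Q < ME * S₁ := by nlinarith
  unfold M₁ ME S₁ Q at *
  unfold density
  rw [gt_iff_lt, ← mul_div_assoc, div_lt_iff₀ hS₁]
  nlinarith
end

section
/- (Splicing Condition, non-strict contrapositive form.) Let B₁ be a block with S(B₁) > 0 and nonnegative weights, and let E be a block with nonnegative weights disjoint from B₁ as a Finset of entries. Then g(B₁ ∪ E) ≤ g(B₁) if and only if M(E) ≤ Q(B₁, E) · g(B₁). -/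
open Finset

variable {α ι : Type*} [DecidableEq α] [DecidableEq ι]

/-- **Splicing Condition, non-strict contrapositive form.**
`g(B₁ ∪ E) ≤ g(B₁)` iff `M(E) ≤ Q(B₁, E) · g(B₁)`. -/
theorem splicing_condition_nonstrict {N : ℕ} (w : α → ℝ) (π : Fin N → α → ι)
    (B₁ E : Finset α)
    (hw : ∀ a, 0 ≤ w a)
    (hS : 0 < blockSize π B₁)
    (hdisj : Disjoint E B₁) :
    density w π (B₁ ∪ E) ≤ density w π B₁ ↔
      blockMass w E ≤ (newIdxCount π B₁ E : ℝ) * density w π B₁ := by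
  have hsize : blockSize π (B₁ ∪ E) = blockSize π B₁ + newIdxCount π B₁ E := by
    unfold blockSize newIdxCount
    rw [← Finset.sum_add_distrib]
    refine Finset.sum_congr rfl fun n _ => ?_
    unfold modeIdx
    rw [Finset.image_union]
    have := Finset.card_sdiff_add_card (E.image (π n)) (B₁.image (π n))
    rw [Finset.union_comm] at this
    omega
  have hmass : blockMass w (B₁ ∪ E) = blockMass w B₁ + blockMass w E := by
    unfold blockMass
    exact Finset.sum_union hdisj.symm
  have hS' : (0:ℝ) < (blockSize π B₁ : ℝ) := by exact_mod_cast hS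
  have hSQ : (0:ℝ) < (blockSize π B₁ : ℝ) + (newIdxCount π B₁ E : ℝ) := by positivity
  unfold density
  rw [hsize, hmass]
  push_cast
  rw [div_le_div_iff₀ hSQ hS', ← mul_div_assoc, le_div_iff₀ hS']
  constructor <;> intro h <;> nlinarith
end

section
/- (Iterated splicing strictly increases density.) Let B₀, E₀, E₁, …, E_{K-1} be blocks with nonnegative weights, define B_{k+1} = B_k ∪ E_k, and suppose for every k < K that E_k is disjoint from B_k as a Finset of entries, that S(B₀) > 0, and that M(E_k) > Q(B_k, E_k) · g(B_k). Then the densities are strictly increasing: g(B_{k+1}) > g(B_k) for all k < K; in particular g(B_K) > g(B₀) when K ≥ 1. -/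
open Finset

variable {α ι : Type*} [DecidableEq α] [DecidableEq ι]

lemma blockSize_union {N : ℕ} (π : Fin N → α → ι) (B E : Finset α) :
    blockSize π (B ∪ E) = blockSize π B + newIdxCount π B E := by
  unfold blockSize newIdxCount
  rw [← Finset.sum_add_distrib]
  refine Finset.sum_congr rfl fun n _ => ?_
  have h : modeIdx π n (B ∪ E) = modeIdx π n B ∪ modeIdx π n E := by
    simp [modeIdx, Finset.image_union]
  rw [h, Finset.union_comm, ← Finset.card_sdiff_add_card]
  omega

lemma blockMass_union (w : α → ℝ) {B E : Finset α} (h : Disjoint E B) :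
    blockMass w (B ∪ E) = blockMass w B + blockMass w E := by
  unfold blockMass
  exact Finset.sum_union h.symm

lemma splice_step {N : ℕ} (w : α → ℝ) (π : Fin N → α → ι) {B E : Finset α}
    (hw : ∀ a, 0 ≤ w a) (hS : 0 < blockSize π B) (hd : Disjoint E B)
    (hm : blockMass w E > (newIdxCount π B E : ℝ) * density w π B) :
    density w π (B ∪ E) > density w π B := by
  have hM : 0 ≤ blockMass w B := Finset.sum_nonneg fun a _ => hw a
  have hSpos : (0 : ℝ) < (blockSize π B : ℝ) := by exact_mod_cast hS
  rw [density, blockSize_union, blockMass_union w hd]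
  have hS2 : (0 : ℝ) < ((blockSize π B + newIdxCount π B E : ℕ) : ℝ) := by
    push_cast; positivity
  rw [gt_iff_lt, density, div_lt_div_iff₀ hSpos hS2]
  push_cast
  have h2 : blockMass w E * (blockSize π B : ℝ)
      > (newIdxCount π B E : ℝ) * density w π B * blockSize π B :=
    mul_lt_mul_of_pos_right hm hSpos
  rw [density] at h2
  have h3 : blockMass w B / (blockSize π B : ℝ) * (blockSize π B : ℝ)
      = blockMass w B := div_mul_cancel₀ _ (ne_of_gt hSpos)
  nlinarith

/-- **Iterated splicing strictly increases density.** If at each step `k < K` the merged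
block `E k` is disjoint from `B k` and satisfies the splicing condition's mass threshold,
then the densities strictly increase at every step; in particular `g(B K) > g(B 0)`
when `K ≥ 1`. -/
theorem iterated_splicing {N : ℕ} (w : α → ℝ) (π : Fin N → α → ι)
    (K : ℕ) (B : ℕ → Finset α) (E : ℕ → Finset α)
    (hw : ∀ a, 0 ≤ w a)
    (hS : 0 < blockSize π (B 0))
    (hstep : ∀ k < K, B (k + 1) = B k ∪ E k)
    (hdisj : ∀ k < K, Disjoint (E k) (B k))
    (hmass : ∀ k < K,
      blockMass w (E k) > (newIdxCount π (B k) (E k) : ℝ) * density w π (B k)) :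
    (∀ k < K, density w π (B (k + 1)) > density w π (B k)) ∧
      (1 ≤ K → density w π (B K) > density w π (B 0)) := by
  have hsize : ∀ k, k ≤ K → 0 < blockSize π (B k) := by
    intro k hk
    induction k with
    | zero => exact hS
    | succ n ih =>
      rw [hstep n (by omega), blockSize_union]
      have := ih (by omega)
      omega
  have hpart1 : ∀ k < K, density w π (B (k + 1)) > density w π (B k) := by
    intro k hk
    rw [hstep k hk]
    exact splice_step w π hw (hsize k (le_of_lt hk)) (hdisj k hk) (hmass k hk)
  refine ⟨hpart1, fun hK => ?_⟩
  have : ∀ k, 1 ≤ k → k ≤ K → density w π (B k) > density w π (B 0) := by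
    intro k
    induction k with
    | zero => omega
    | succ n ih =>
      intro _ hk
      rcases Nat.eq_zero_or_pos n with h0 | h1
      · subst h0; exact hpart1 0 (by omega)
      · exact lt_trans (ih h1 (by omega)) (hpart1 n (by omega))
  exact this K hK le_rfl
end
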